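/- arXiv:1710.09050 — 5 statements merged into one kernel-verified Lean document; each statement's English description precedes it below -/
import Mathlib

section
/- If 0 < ε < 1 and s₁, ..., s_d are positive real numbers with ∏ s_j = 1 and ∑ s_j ≤ d + ε, then there exists a constant C depending only on d such that |s_j − 1| ≤ C·ε^(1/2) for every 1 ≤ j ≤ d. -/
open Finset

/-! Since `log t ≤ t - 1`, the terms `s j - 1 - log (s j)` are nonnegative, and their sum is
`∑ s j - d ≤ ε` because `∑ log (s j) = 0`. Applying `log t ≤ t - 1` to `t = √x` gives
`(√x - 1)² ≤ x - 1 - log x`, so `|√(s j) - 1| ≤ √ε`, and `|s j - 1| = (√(s j) + 1) |√(s j) - 1|`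
with `s j ≤ d + 1`. -/

namespace Real

lemma sub_one_sub_log_nonneg {x : ℝ} (hx : 0 < x) : 0 ≤ x - 1 - log x := by
  linarith [log_le_sub_one_of_pos hx]

lemma sq_sqrt_sub_one_le_sub_one_sub_log {x : ℝ} (hx : 0 < x) :
    (√x - 1) ^ 2 ≤ x - 1 - log x := by
  have hlog_sqrt : log x / 2 ≤ √x - 1 := by
    rw [← log_sqrt hx.le]
    exact log_le_sub_one_of_pos (sqrt_pos.mpr hx)
  nlinarith [sq_sqrt hx.le]

lemma sum_sub_one_sub_log_eq_of_prod_eq_one {ι : Type*} [Fintype ι] {s : ι → ℝ}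
    (hs : ∀ i, 0 < s i) (hprod : ∏ i, s i = 1) :
    ∑ i, (s i - 1 - log (s i)) = ∑ i, s i - Fintype.card ι := by
  have hlog : ∑ i, log (s i) = 0 := by
    rw [← log_prod fun i _ ↦ (hs i).ne', hprod, log_one]
  simp [sum_sub_distrib, hlog]

lemma sub_one_sub_log_le_of_prod_eq_one {ι : Type*} [Fintype ι] {s : ι → ℝ}
    (hs : ∀ i, 0 < s i) (hprod : ∏ i, s i = 1) (j : ι) :
    s j - 1 - log (s j) ≤ ∑ i, s i - Fintype.card ι := by
  rw [← sum_sub_one_sub_log_eq_of_prod_eq_one hs hprod]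
  exact single_le_sum (f := fun i ↦ s i - 1 - log (s i))
    (fun i _ ↦ sub_one_sub_log_nonneg (hs i)) (mem_univ j)

lemma abs_sub_one_le_of_sq_sqrt_sub_one_le {x M ε : ℝ} (hx : 0 ≤ x) (hxM : x ≤ M)
    (hε : (√x - 1) ^ 2 ≤ ε) : |x - 1| ≤ (√M + 1) * √ε := by
  have hfactor : x - 1 = (√x + 1) * (√x - 1) := by nlinarith [sq_sqrt hx]
  have hsqrt : |√x - 1| ≤ √ε := by
    rw [← sqrt_sq_eq_abs]
    exact sqrt_le_sqrt hε
  rw [hfactor, abs_mul, abs_of_nonneg (by positivity : 0 ≤ √x + 1)]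
  exact mul_le_mul (by gcongr) hsqrt (abs_nonneg _) (by positivity)

end Real

theorem stmt1_general (d : ℕ) :
    ∃ C : ℝ, 0 < C ∧ ∀ ε : ℝ, 0 < ε → ε < 1 →
      ∀ s : Fin d → ℝ, (∀ j, 0 < s j) →
        ∏ j, s j = 1 → ∑ j, s j ≤ d + ε →
          ∀ j, |s j - 1| ≤ C * Real.sqrt ε := by
  refine ⟨√(d + 1) + 1, by positivity, fun ε _ _ s hs hprod hsum j ↦ ?_⟩
  have hdefect : s j - 1 - Real.log (s j) ≤ ε := by
    have := Real.sub_one_sub_log_le_of_prod_eq_one hs hprod j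
    simp only [Fintype.card_fin] at this
    linarith
  have hsj_le : s j ≤ d + 1 := by
    linarith [single_le_sum (fun k _ ↦ (hs k).le) (mem_univ j)]
  exact Real.abs_sub_one_le_of_sq_sqrt_sub_one_le (hs j).le hsj_le
    ((Real.sq_sqrt_sub_one_le_sub_one_sub_log (hs j)).trans hdefect)

theorem stmt1 (d : ℕ) (hd : 1 ≤ d) :
    ∃ C : ℝ, 0 < C ∧ ∀ ε : ℝ, 0 < ε → ε < 1 →
      ∀ s : Fin d → ℝ, (∀ j, 0 < s j) →
        ∏ j, s j = 1 → ∑ j, s j ≤ d + ε →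
          ∀ j, |s j - 1| ≤ C * Real.sqrt ε :=
  stmt1_general d
end

section
/- Let f : [0, ∞) → [0, ∞) be nonincreasing and supported on [0, X₁], and suppose f is concave down (f'' ≤ 0) on an interval [p − δ, p + δ] ⊂ (0, X₁) with δ > 0. If s ≥ 2/δ, then ∫₀^∞ f(x/s) dx − ∑_{k=1}^∞ f(k/s) ≥ (1/2)(f(p − δ/2) − f(p + δ/2)). -/
/-!
Write `F x = f (x / s)`. On every cell `[k, k + 1]` the integral of the antitone `F` is at least
its right-endpoint value `F (k + 1)`. On cells where `F` is concave the trapezoid rule does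
better: the integral is at least `(F k + F (k + 1)) / 2`, so the excess is at least the triangle
area `(F k - F (k + 1)) / 2`. Since `s δ ≥ 2`, the integers `a ≤ s (p - δ / 2)` and
`b ≥ s (p + δ / 2)` can be chosen with `[a, b]` inside the concavity window
`[s (p - 2δ), s (p + 2δ)]`; telescoping the triangles over `[a, b]` gives `(F a - F b) / 2`.
-/

open MeasureTheory Set intervalIntegral

theorem ConcaveOn.trapezoid_le_intervalIntegral {g : ℝ → ℝ} {a b : ℝ} (hab : a ≤ b)
    (hg : ConcaveOn ℝ (Icc a b) g) (hint : IntervalIntegrable g volume a b) :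
    (b - a) * ((g a + g b) / 2) ≤ ∫ x in a..b, g x := by
  rcases hab.eq_or_lt with rfl | hlt
  · simp
  have hba : b - a ≠ 0 := (sub_pos.2 hlt).ne'
  set chord : ℝ → ℝ := fun x ↦ g a + (x - a) / (b - a) * (g b - g a)
  have hchord : ∀ x ∈ Icc a b, chord x ≤ g x := by
    intro x ⟨hax, hxb⟩
    have h := hg.2 (left_mem_Icc.2 hab) (right_mem_Icc.2 hab)
      (div_nonneg (sub_nonneg.2 hxb) (sub_pos.2 hlt).le)
      (div_nonneg (sub_nonneg.2 hax) (sub_pos.2 hlt).le)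
      (by rw [← add_div, sub_add_sub_cancel, div_self hba])
    have hx : ((b - x) / (b - a)) • a + ((x - a) / (b - a)) • b = x := by
      simp only [smul_eq_mul]; field_simp; ring
    rw [hx, smul_eq_mul, smul_eq_mul] at h
    calc chord x = (b - x) / (b - a) * g a + (x - a) / (b - a) * g b := by
          simp only [chord]; field_simp; ring
      _ ≤ g x := h
  calc (b - a) * ((g a + g b) / 2) = ∫ x in a..b, chord x := by
        rw [intervalIntegral.integral_add intervalIntegrable_const
            ((by fun_prop : Continuous fun x ↦ (x - a) / (b - a) * (g b - g a)).intervalIntegrable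
              _ _),
          intervalIntegral.integral_mul_const, intervalIntegral.integral_div,
          integral_comp_sub_right (fun x ↦ x), integral_id, intervalIntegral.integral_const,
          sub_self, smul_eq_mul]
        field_simp
        ring
    _ ≤ ∫ x in a..b, g x :=
        integral_mono_on hab ((by fun_prop : Continuous chord).intervalIntegrable _ _) hint hchord

theorem ConcaveOn.comp_div {f : ℝ → ℝ} {lo hi s : ℝ} (hf : ConcaveOn ℝ (Icc lo hi) f)
    (hs : 0 < s) : ConcaveOn ℝ (Icc (s * lo) (s * hi)) (fun x ↦ f (x / s)) := by
  refine ((hf.comp_linearMap (s⁻¹ • LinearMap.id)).subset ?_ (convex_Icc _ _)).congr ?_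
  · intro x ⟨h1, h2⟩
    simp only [mem_preimage, LinearMap.smul_apply, LinearMap.id_apply, smul_eq_mul,
      inv_mul_eq_div, mem_Icc, le_div_iff₀ hs, div_le_iff₀ hs]
    constructor <;> linarith
  · intro x _
    simp [div_eq_inv_mul]

theorem ContinuousOn.intervalIntegrable_nat_add_one {F : ℝ → ℝ} (hF : ContinuousOn F (Ici 0))
    (k : ℕ) : IntervalIntegrable F volume k (k + 1) :=
  (hF.mono fun x hx ↦ by
    rw [uIcc_of_le (by linarith)] at hx
    exact k.cast_nonneg.trans hx.1).intervalIntegrable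

theorem integral_Ioi_sub_tsum_eq_sum_range {F : ℝ → ℝ} {N : ℕ} (hF : ContinuousOn F (Ici 0))
    (hN : ∀ x, (N : ℝ) ≤ x → F x = 0) :
    (∫ x in Ioi 0, F x) - ∑' k : ℕ, F (k + 1)
      = ∑ k ∈ Finset.range N, ((∫ x in k..k + 1, F x) - F (k + 1)) := by
  have hint : (∫ x in Ioi 0, F x) = ∑ k ∈ Finset.range N, ∫ x in k..k + 1, F x := by
    rw [setIntegral_eq_of_subset_of_forall_sdiff_eq_zero measurableSet_Ioi
      (Ioc_subset_Ioi_self (b := 0) (a := (N : ℝ)))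
      fun x ⟨hx0, hxN⟩ ↦ hN x (not_le.1 fun h ↦ hxN ⟨hx0, h⟩).le,
      ← integral_of_le N.cast_nonneg]
    convert (sum_integral_adjacent_intervals (a := fun k : ℕ ↦ (k : ℝ)) (f := F)
      (μ := volume) fun k _ ↦ by simpa using hF.intervalIntegrable_nat_add_one k).symm
      using 3 <;> simp
  have hsum : ∑' k : ℕ, F (k + 1) = ∑ k ∈ Finset.range N, F (k + 1) :=
    tsum_eq_sum fun k hk ↦ hN _ (by
      rw [Finset.mem_range, not_lt] at hk
      exact_mod_cast hk.trans k.le_succ)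
  rw [hint, hsum, Finset.sum_sub_distrib]

theorem sub_div_two_le_sum_range_integral_sub {F : ℝ → ℝ} {a b N : ℕ}
    (hcont : ContinuousOn F (Ici 0)) (hanti : AntitoneOn F (Ici 0))
    (hconc : ConcaveOn ℝ (Icc (a : ℝ) b) F) (hab : a ≤ b) (hbN : b ≤ N) :
    (F a - F b) / 2 ≤ ∑ k ∈ Finset.range N, ((∫ x in k..k + 1, F x) - F (k + 1)) := by
  have hcell : ∀ k : ℕ, F (k + 1) ≤ ∫ x in k..k + 1, F x := fun k ↦ by
    simpa using (hanti.mono (Icc_subset_Ici_iff (by linarith) |>.2 k.cast_nonneg)).sum_le_integral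
        (x₀ := k) (a := 1)
  have hcell_concave : ∀ k ∈ Finset.Ico a b,
      (F k - F (k + 1)) / 2 ≤ (∫ x in k..k + 1, F x) - F (k + 1) := by
    intro k hk
    rw [Finset.mem_Ico] at hk
    have := (hconc.subset (Icc_subset_Icc (by exact_mod_cast hk.1) (by exact_mod_cast hk.2))
      (convex_Icc _ _)).trapezoid_le_intervalIntegral (by linarith)
      (hcont.intervalIntegrable_nat_add_one k)
    linarith
  calc (F a - F b) / 2 = ∑ k ∈ Finset.Ico a b, (F k - F (k + 1)) / 2 := by
        rw [← Finset.sum_div, ← neg_sub (F b), ← Finset.sum_Ico_sub (fun k : ℕ ↦ F k) hab,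
          ← Finset.sum_neg_distrib]
        simp only [Nat.cast_add, Nat.cast_one, neg_sub]
    _ ≤ ∑ k ∈ Finset.Ico a b, ((∫ x in k..k + 1, F x) - F (k + 1)) :=
        Finset.sum_le_sum hcell_concave
    _ ≤ ∑ k ∈ Finset.range N, ((∫ x in k..k + 1, F x) - F (k + 1)) :=
        Finset.sum_le_sum_of_subset_of_nonneg
          (Finset.range_eq_Ico N ▸ Finset.Ico_subset_Ico a.zero_le hbN)
          fun k _ _ ↦ sub_nonneg.2 (hcell k)

theorem sub_div_two_le_integral_Ioi_sub_tsum {F : ℝ → ℝ} {a b : ℕ} {M : ℝ}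
    (hcont : ContinuousOn F (Ici 0)) (hanti : AntitoneOn F (Ici 0))
    (hconc : ConcaveOn ℝ (Icc (a : ℝ) b) F) (hab : a ≤ b) (hM : ∀ x, M ≤ x → F x = 0) :
    (F a - F b) / 2 ≤ (∫ x in Ioi 0, F x) - ∑' k : ℕ, F (k + 1) := by
  rw [integral_Ioi_sub_tsum_eq_sum_range (N := max b ⌈M⌉₊) hcont fun x hx ↦
    hM x <| (Nat.le_ceil M).trans <| (Nat.cast_le.2 (le_max_right _ _)).trans hx]
  exact sub_div_two_le_sum_range_integral_sub hcont hanti hconc hab (le_max_left _ _)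

theorem exists_nat_mem_Icc_of_add_one_le {u v : ℝ} (hv : 0 ≤ v) (huv : u + 1 ≤ v) :
    ∃ n : ℕ, u ≤ n ∧ (n : ℝ) ≤ v :=
  ⟨⌊v⌋₊, by linarith [Nat.sub_one_lt_floor v], Nat.floor_le hv⟩

theorem stmt6_general (f : ℝ → ℝ) (X₁ p δ : ℝ) (hδ : 0 < δ)
    (hcont : ContinuousOn f (Ici 0))
    (hanti : AntitoneOn f (Ici 0))
    (hsupp : ∀ x, X₁ ≤ x → f x = 0)
    (hsub : Icc (p - 2 * δ) (p + 2 * δ) ⊆ Ioo 0 X₁)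
    (hdiff : ∀ x ∈ Icc (p - 2 * δ) (p + 2 * δ), DifferentiableAt ℝ f x)
    (hdiff2 : ∀ x ∈ Icc (p - 2 * δ) (p + 2 * δ), DifferentiableAt ℝ (deriv f) x)
    (hconc : ∀ x ∈ Icc (p - 2 * δ) (p + 2 * δ), deriv (deriv f) x ≤ 0)
    (s : ℝ) (hs : 2 / δ ≤ s) :
    (1 / 2) * (f (p - δ / 2) - f (p + δ / 2))
      ≤ (∫ x in Ioi (0 : ℝ), f (x / s)) - ∑' k : ℕ, f ((k + 1) / s) := by
  have hs0 : 0 < s := (div_pos two_pos hδ).trans_le hs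
  have hsδ : 2 ≤ s * δ := by rwa [div_le_iff₀ hδ] at hs
  have hp : 0 < p - 2 * δ := (hsub (left_mem_Icc.2 (by linarith))).1
  have hfconc : ConcaveOn ℝ (Icc (p - 2 * δ) (p + 2 * δ)) f :=
    concaveOn_of_deriv2_nonpos (convex_Icc _ _)
      (fun x hx ↦ (hdiff x hx).continuousAt.continuousWithinAt)
      (fun x hx ↦ (hdiff x (interior_subset hx)).differentiableWithinAt)
      (fun x hx ↦ (hdiff2 x (interior_subset hx)).differentiableWithinAt)
      fun x hx ↦ hconc x (interior_subset hx)
  set F : ℝ → ℝ := fun x ↦ f (x / s)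
  have hFcont : ContinuousOn F (Ici 0) :=
    hcont.comp (continuous_id.div_const s).continuousOn fun x hx ↦ div_nonneg hx hs0.le
  have hFanti : AntitoneOn F (Ici 0) := fun x hx y hy hxy ↦
    hanti (div_nonneg hx hs0.le) (div_nonneg hy hs0.le) (by gcongr)
  obtain ⟨a, ha_lo, ha_hi⟩ := exists_nat_mem_Icc_of_add_one_le (u := s * (p - 2 * δ))
    (v := s * (p - δ / 2)) (by nlinarith) (by nlinarith)
  obtain ⟨b, hb_lo, hb_hi⟩ := exists_nat_mem_Icc_of_add_one_le (u := s * (p + δ / 2))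
    (v := s * (p + 2 * δ)) (by nlinarith) (by nlinarith)
  have hab : a ≤ b := by exact_mod_cast ha_hi.trans (by nlinarith) |>.trans hb_lo
  have hFconc : ConcaveOn ℝ (Icc (a : ℝ) b) F :=
    (hfconc.comp_div hs0).subset (Icc_subset_Icc ha_lo hb_hi) (convex_Icc _ _)
  have hFN : ∀ x, s * X₁ ≤ x → F x = 0 := fun x hx ↦ hsupp _ ((le_div_iff₀' hs0).2 hx)
  have hfa : f (p - δ / 2) ≤ F a :=
    hanti (div_nonneg a.cast_nonneg hs0.le) (mem_Ici.2 (by linarith)) ((div_le_iff₀' hs0).2 ha_hi)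
  have hfb : F b ≤ f (p + δ / 2) :=
    hanti (mem_Ici.2 (by linarith)) (div_nonneg b.cast_nonneg hs0.le) ((le_div_iff₀' hs0).2 hb_lo)
  calc _ ≤ (F a - F b) / 2 := by linarith
    _ ≤ _ := sub_div_two_le_integral_Ioi_sub_tsum hFcont hFanti hFconc hab hFN

theorem stmt6 (f : ℝ → ℝ) (X₁ p δ : ℝ) (hδ : 0 < δ)
    (hcont : ContinuousOn f (Ici 0))
    (hnonneg : ∀ x, 0 ≤ x → 0 ≤ f x)
    (hanti : AntitoneOn f (Ici 0))
    (hsupp : ∀ x, X₁ ≤ x → f x = 0)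
    (hsub : Icc (p - 2 * δ) (p + 2 * δ) ⊆ Ioo 0 X₁)
    (hdiff : ∀ x ∈ Icc (p - 2 * δ) (p + 2 * δ), DifferentiableAt ℝ f x)
    (hdiff2 : ∀ x ∈ Icc (p - 2 * δ) (p + 2 * δ), DifferentiableAt ℝ (deriv f) x)
    (hconc : ∀ x ∈ Icc (p - 2 * δ) (p + 2 * δ), deriv (deriv f) x ≤ 0)
    (s : ℝ) (hs : 2 / δ ≤ s) :
    (1 / 2) * (f (p - δ / 2) - f (p + δ / 2))
      ≤ (∫ x in Ioi (0 : ℝ), f (x / s)) - ∑' k : ℕ, f ((k + 1) / s) :=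
  stmt6_general f X₁ p δ hδ hcont hanti hsupp hsub hdiff hdiff2 hconc s hs
end

section
/- Let Ω ⊂ ℝ^d be a compact convex body symmetric with respect to each coordinate hyperplane. Then the number of positive lattice points satisfies #(ℕ^d ∩ tAΩ) ≤ (t^{d−1}/a₁) · ∑_{k₁ ∈ ℕ} f(k₁/(a₁ t)), where A = diag(a₁, ..., a_d) with det A = 1 and f(x₁) = ∫_{ℝ₊^{d−1}} χ_Ω(x₁, x') dx' is the (restricted) parallel section function of Ω in the x₁-direction. -/
open MeasureTheory Set Finset

/-! Convexity together with the coordinate reflections makes every section of `Ω` unconditional: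
it is closed under decreasing coordinates in absolute value. Hence for every positive lattice point
`(n, k')` counted, the box `[0, k'/(a t)]`, and with it the cell
`∏ⱼ ((k'ⱼ - 1)/(aⱼ t), k'ⱼ/(aⱼ t)]`, lies in the restricted section at `n/(a₁ t)`. The cells are
disjoint of volume `∏ⱼ (aⱼ t)⁻¹ = a₁ / t ^ m`, so the slice at `n` has at most
`(t ^ m / a₁) f (n/(a₁ t))` points; summing over `n ≥ 1` gives the bound. -/

section Unconditional

variable {ι : Type*} [DecidableEq ι] {s : Set (ι → ℝ)}

theorem Convex.update_mem_of_abs_le (hs : Convex ℝ s)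
    (hsym : ∀ x ∈ s, ∀ j, Function.update x j (-x j) ∈ s) {z : ι → ℝ} (hz : z ∈ s) (j : ι)
    {c : ℝ} (hc : |c| ≤ |z j|) : Function.update z j c ∈ s := by
  set L : ℝ →ᵃ[ℝ] ι → ℝ := AffineMap.lineMap (Function.update z j 0) (Function.update z j 1)
  have hL : ∀ c, L c = Function.update z j c := fun c => by
    ext i
    rcases eq_or_ne i j with rfl | hi <;> simp [L, AffineMap.lineMap_apply, *]
  have hconv : (L ⁻¹' s).OrdConnected :=
    convex_iff_ordConnected.mp (hs.affine_preimage L)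
  have hpos : z j ∈ L ⁻¹' s := by simpa [hL] using hz
  have hneg : -z j ∈ L ⁻¹' s := by simpa [hL] using hsym z hz j
  have hmem : c ∈ L ⁻¹' s := by
    rcases le_total 0 (z j) with h | h
    · exact hconv.out hneg hpos (abs_le.mp (hc.trans_eq (abs_of_nonneg h)))
    · have := abs_le.mp (hc.trans_eq (abs_of_nonpos h))
      rw [neg_neg] at this
      exact hconv.out hpos hneg this
  simpa [hL] using hmem

theorem Convex.mem_of_abs_le_abs [Fintype ι] (hs : Convex ℝ s)
    (hsym : ∀ x ∈ s, ∀ j, Function.update x j (-x j) ∈ s) {z w : ι → ℝ} (hz : z ∈ s)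
    (hw : ∀ j, |w j| ≤ |z j|) : w ∈ s := by
  suffices ∀ u : Finset ι, (fun i => if i ∈ u then w i else z i) ∈ s by simpa using this univ
  intro u
  induction u using Finset.induction with
  | empty => simpa using hz
  | insert j u hj ih =>
    convert hs.update_mem_of_abs_le hsym ih j (c := w j) (by simpa [hj] using hw j) using 1
    ext i
    rcases eq_or_ne i j with rfl | hi <;> simp [*]

end Unconditional

section LatticeCells

variable {ι : Type*}

def latticeCell (c : ι → ℝ) (k : ι → ℕ) : Set (ι → ℝ) :=
  Set.pi univ fun j => Ioc (((k j : ℝ) - 1) / c j) (k j / c j)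

theorem volume_latticeCell [Fintype ι] (c : ι → ℝ) (k : ι → ℕ) :
    volume (latticeCell c k) = ∏ j, ENNReal.ofReal (c j)⁻¹ := by
  simp only [latticeCell, Real.volume_pi_Ioc, ← sub_div, sub_sub_cancel, one_div]

theorem pairwise_disjoint_latticeCell {c : ι → ℝ} (hc : ∀ j, 0 < c j) :
    Pairwise fun k l => Disjoint (latticeCell c k) (latticeCell c l) := by
  have key : ∀ {k l : ι → ℕ} {j}, k j < l j → Disjoint (latticeCell c k) (latticeCell c l) :=
    fun {k l j} h => disjoint_univ_pi.mpr ⟨j, Ioc_disjoint_Ioc_of_le <|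
      div_le_div_of_nonneg_right (le_sub_iff_add_le.mpr (mod_cast h)) (hc j).le⟩
  intro k l hkl
  obtain ⟨j, hj⟩ := Function.ne_iff.mp hkl
  exact hj.lt_or_gt.elim key fun h => (key h).symm

theorem latticeCell_subset_Icc {c : ι → ℝ} (hc : ∀ j, 0 < c j) {k : ι → ℕ}
    (hk : ∀ j, 1 ≤ k j) : latticeCell c k ⊆ Icc 0 fun j => k j / c j := fun x hx =>
  ⟨fun j => (div_nonneg (by simpa using hk j) (hc j).le).trans (hx j trivial).1.le,
    fun j => (hx j trivial).2⟩

theorem card_mul_prod_le_volume [Fintype ι] {T : Set (ι → ℝ)} {c : ι → ℝ} (hc : ∀ j, 0 < c j)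
    {G : Finset (ι → ℕ)} (hG : ∀ k ∈ G, (∀ j, 1 ≤ k j) ∧ Icc 0 (fun j => k j / c j) ⊆ T) :
    G.card * ∏ j, ENNReal.ofReal (c j)⁻¹ ≤ volume T :=
  calc G.card * ∏ j, ENNReal.ofReal (c j)⁻¹ = ∑ k ∈ G, volume (latticeCell c k) := by
        simp [volume_latticeCell]
    _ = volume (⋃ k ∈ G, latticeCell c k) :=
        (measure_biUnion_finset ((pairwise_disjoint_latticeCell hc).set_pairwise _)
          fun _ _ => MeasurableSet.univ_pi fun _ => measurableSet_Ioc).symm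
    _ ≤ volume T := measure_mono <| iUnion₂_subset fun k hk =>
        (latticeCell_subset_Icc hc (hG k hk).1).trans (hG k hk).2

end LatticeCells

section RestrictedSection

variable {ι : Type*} {Ω : Set (ℝ × (ι → ℝ))}

def restrictedSection (Ω : Set (ℝ × (ι → ℝ))) (x₁ : ℝ) : Set (ι → ℝ) :=
  {x' | (∀ j, 0 ≤ x' j) ∧ (x₁, x') ∈ Ω}

theorem Convex.slice (hΩ : Convex ℝ Ω) (x₁ : ℝ) : Convex ℝ {x' | (x₁, x') ∈ Ω} :=
  fun x hx y hy a b ha hb hab => by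
    simpa [Prod.smul_mk, ← add_mul, hab] using hΩ hx hy ha hb hab

theorem Convex.Icc_zero_subset_restrictedSection [Fintype ι] [DecidableEq ι]
    (hΩ : Convex ℝ Ω)
    (hsym : ∀ x ∈ Ω, ∀ j, (x.1, Function.update x.2 j (-(x.2 j))) ∈ Ω)
    {x₁ : ℝ} {z : ι → ℝ} (hz : (x₁, z) ∈ Ω) : Icc 0 z ⊆ restrictedSection Ω x₁ :=
  fun _ hw => ⟨hw.1, (hΩ.slice x₁).mem_of_abs_le_abs (fun _ hx j => hsym _ hx j) hz
    fun j => (abs_of_nonneg (hw.1 j)).trans_le ((hw.2 j).trans (le_abs_self _))⟩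

theorem IsCompact.volume_restrictedSection_lt_top [Fintype ι] (hΩ : IsCompact Ω) (x₁ : ℝ) :
    volume (restrictedSection Ω x₁) < ⊤ :=
  (measure_mono (show restrictedSection Ω x₁ ⊆ Prod.snd '' Ω from
    fun x' hx' => ⟨(x₁, x'), hx'.2, rfl⟩)).trans_lt
    (hΩ.image continuous_snd).measure_lt_top

theorem IsCompact.eventually_restrictedSection_eq_empty (hΩ : IsCompact Ω) :
    ∀ᶠ x₁ in Filter.atTop, restrictedSection Ω x₁ = ∅ := by
  obtain ⟨R, hR⟩ := (hΩ.image continuous_fst).bddAbove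
  filter_upwards [Filter.eventually_gt_atTop R] with x₁ hx₁
  exact eq_empty_of_forall_notMem fun x' hx' => hx₁.not_ge (hR ⟨_, hx'.2, rfl⟩)

theorem IsCompact.summable_volume_restrictedSection [Fintype ι] (hΩ : IsCompact Ω) {u : ℕ → ℝ}
    (hu : Filter.Tendsto u Filter.atTop Filter.atTop) :
    Summable fun k => (volume (restrictedSection Ω (u k))).toReal := by
  refine summable_of_hasFiniteSupport (Filter.eventually_cofinite.mp ?_)
  rw [Nat.cofinite_eq_atTop]
  filter_upwards [hu.eventually hΩ.eventually_restrictedSection_eq_empty] with k hk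
  simp [hk]

theorem card_mul_prod_inv_le_volume_restrictedSection [Fintype ι] [DecidableEq ι]
    (hcomp : IsCompact Ω) (hconv : Convex ℝ Ω)
    (hsym : ∀ x ∈ Ω, ∀ j, (x.1, Function.update x.2 j (-(x.2 j))) ∈ Ω)
    {c : ι → ℝ} (hc : ∀ j, 0 < c j) {x₁ : ℝ} {G : Finset (ι → ℕ)}
    (hG : ∀ k ∈ G, (∀ j, 1 ≤ k j) ∧ (x₁, fun j => (k j : ℝ) / c j) ∈ Ω) :
    G.card * ∏ j, (c j)⁻¹ ≤ (volume (restrictedSection Ω x₁)).toReal := by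
  have hvol := card_mul_prod_le_volume hc fun k hk =>
    ⟨(hG k hk).1, hconv.Icc_zero_subset_restrictedSection hsym (hG k hk).2⟩
  have := ENNReal.toReal_mono (hcomp.volume_restrictedSection_lt_top x₁).ne hvol
  rwa [ENNReal.toReal_mul, ENNReal.toReal_natCast, ENNReal.toReal_prod,
    prod_congr rfl fun j _ => ENNReal.toReal_ofReal (inv_nonneg.2 (hc j).le)] at this

end RestrictedSection

theorem Set.ncard_le_of_forall_finset_card_le {α : Type*} {s : Set α} {C : ℝ}
    (h : ∀ G : Finset α, ↑G ⊆ s → (G.card : ℝ) ≤ C) : (s.ncard : ℝ) ≤ C := by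
  by_cases hs : s.Finite
  · simpa [← ncard_coe_finset] using h hs.toFinset (by simp)
  · simpa [Set.Infinite.ncard hs] using h ∅ (by simp)

theorem Finset.card_le_tsum_of_fiber_card_le {β : Type*} {G : Finset (ℕ × β)} {g : ℕ → ℝ}
    (hg : Summable g) (hg₀ : ∀ n, 0 ≤ g n) (hG : ∀ x ∈ G, 1 ≤ x.1)
    (hfib : ∀ n (H : Finset β), (∀ y ∈ H, (n + 1, y) ∈ G) → (H.card : ℝ) ≤ g n) :
    (G.card : ℝ) ≤ ∑' n, g n := by
  classical
  calc (G.card : ℝ) = ∑ n ∈ G.image (·.1 - 1), ((G.filter (·.1 = n + 1)).card : ℝ) := by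
        rw [card_eq_sum_card_image (·.1 - 1) G]
        push_cast
        refine sum_congr rfl fun n _ => ?_
        congr 2
        exact filter_congr fun x hx => by have := hG x hx; omega
    _ ≤ ∑ n ∈ G.image (·.1 - 1), g n := sum_le_sum fun n _ => by
        rw [← card_image_of_injOn (f := Prod.snd) fun x hx y hy hxy =>
          Prod.ext ((mem_filter.1 hx).2.trans (mem_filter.1 hy).2.symm) hxy]
        refine hfib n _ fun y hy => ?_
        obtain ⟨x, hx, rfl⟩ := mem_image.1 hy
        obtain ⟨hxG, hx₁⟩ := mem_filter.1 hx
        exact hx₁ ▸ hxG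
    _ ≤ ∑' n, g n := hg.sum_le_tsum _ fun n _ => hg₀ n

theorem prod_mul_inv_eq_div_pow {ι : Type*} [Fintype ι] {a₁ t : ℝ} {a : ι → ℝ}
    (hdet : a₁ * ∏ j, a j = 1) : ∏ j, (a j * t)⁻¹ = a₁ / t ^ Fintype.card ι := by
  rw [prod_inv_distrib, prod_mul_distrib, prod_const, card_univ,
    eq_one_div_of_mul_eq_one_right hdet, one_div, mul_inv, inv_inv, div_eq_mul_inv]

theorem stmt7_general (m : ℕ) (Ω : Set (ℝ × (Fin m → ℝ)))
    (hcomp : IsCompact Ω) (hconv : Convex ℝ Ω)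
    (hsym : ∀ x ∈ Ω, ∀ j, (x.1, Function.update x.2 j (-(x.2 j))) ∈ Ω)
    (a₁ : ℝ) (a : Fin m → ℝ) (ha₁ : 0 < a₁) (ha : ∀ j, 0 < a j)
    (hdet : a₁ * ∏ j, a j = 1) (t : ℝ) (ht : 0 < t)
    (f : ℝ → ℝ)
    (hf : ∀ x₁ : ℝ, f x₁ =
      (volume {x' : Fin m → ℝ | (∀ j, 0 ≤ x' j) ∧ (x₁, x') ∈ Ω}).toReal) :
    ((Set.ncard {k : ℕ × (Fin m → ℕ) | 1 ≤ k.1 ∧ (∀ j, 1 ≤ k.2 j) ∧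
        (((k.1 : ℝ) / (a₁ * t), fun j => (k.2 j : ℝ) / (a j * t)) ∈ Ω)} : ℝ))
      ≤ (t ^ m / a₁) * ∑' k : ℕ, f ((k + 1) / (a₁ * t)) := by
  replace hf : ∀ x₁, f x₁ = (volume (restrictedSection Ω x₁)).toReal := hf
  have hslice : ∀ (x₁ : ℝ) (G : Finset (Fin m → ℕ)),
      (∀ k ∈ G, (∀ j, 1 ≤ k j) ∧ (x₁, fun j => (k j : ℝ) / (a j * t)) ∈ Ω) →
      (G.card : ℝ) ≤ t ^ m / a₁ * f x₁ := fun x₁ G hG => by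
    have := card_mul_prod_inv_le_volume_restrictedSection hcomp hconv hsym
      (fun j => mul_pos (ha j) ht) hG
    rw [prod_mul_inv_eq_div_pow hdet, Fintype.card_fin, ← hf, ← mul_div_assoc,
      div_le_iff₀ (by positivity)] at this
    rw [div_mul_eq_mul_div, le_div_iff₀ ha₁]
    linarith
  have hsum : Summable fun k : ℕ => f ((k + 1) / (a₁ * t)) := by
    simp only [hf]
    exact hcomp.summable_volume_restrictedSection <|
      (tendsto_natCast_atTop_atTop.atTop_add tendsto_const_nhds).atTop_div_const (mul_pos ha₁ ht)
  refine ncard_le_of_forall_finset_card_le fun G hG => ?_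
  rw [← tsum_mul_left]
  refine G.card_le_tsum_of_fiber_card_le (hsum.mul_left _)
    (fun n => mul_nonneg (by positivity) (by rw [hf]; positivity)) (fun x hx => (hG hx).1)
    fun n H hH => hslice _ H fun k hk => ⟨(hG (hH k hk)).2.1, ?_⟩
  exact_mod_cast (hG (hH k hk)).2.2

theorem stmt7 (m : ℕ) (Ω : Set (ℝ × (Fin m → ℝ)))
    (hcomp : IsCompact Ω) (hconv : Convex ℝ Ω)
    (hsym1 : ∀ x ∈ Ω, (-x.1, x.2) ∈ Ω)
    (hsym : ∀ x ∈ Ω, ∀ j, (x.1, Function.update x.2 j (-(x.2 j))) ∈ Ω)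
    (a₁ : ℝ) (a : Fin m → ℝ) (ha₁ : 0 < a₁) (ha : ∀ j, 0 < a j)
    (hdet : a₁ * ∏ j, a j = 1) (t : ℝ) (ht : 0 < t)
    (f : ℝ → ℝ)
    (hf : ∀ x₁ : ℝ, f x₁ =
      (volume {x' : Fin m → ℝ | (∀ j, 0 ≤ x' j) ∧ (x₁, x') ∈ Ω}).toReal) :
    ((Set.ncard {k : ℕ × (Fin m → ℕ) | 1 ≤ k.1 ∧ (∀ j, 1 ≤ k.2 j) ∧
        (((k.1 : ℝ) / (a₁ * t), fun j => (k.2 j : ℝ) / (a j * t)) ∈ Ω)} : ℝ))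
      ≤ (t ^ m / a₁) * ∑' k : ℕ, f ((k + 1) / (a₁ * t)) :=
  stmt7_general m Ω hcomp hconv hsym a₁ a ha₁ ha hdet t ht f hf
end

section
/- For positive even integers ω₁, ..., ω_d, the volume of 𝒟 ∩ ℝ₊^d, where 𝒟 = {x ∈ ℝ^d : x₁^{ω₁} + ⋯ + x_d^{ω_d} ≤ 1}, equals (∑_{l=1}^d (ω₁⋯ω_d)/ω_l)^{−1} · Γ(1/ω₁)⋯Γ(1/ω_d) / Γ(∑_{l=1}^d 1/ω_l). -/
/-!
Integrate `exp (-∑ i, x i ^ p i)` over the nonnegative orthant in two ways. By Fubini the integral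
is `∏ i, Γ (1 / p i + 1)`. By the layer-cake formula it is `∫ t, e^{-t} V(t)`, where `V(t)` is the
volume of the orthant part of `{∑ i, x i ^ p i ≤ t}`; the anisotropic dilation `x i ↦ t^{1/p i} x i`
gives `V(t) = t^s V(1)` with `s = ∑ i, 1 / p i`, so the integral is also `Γ (s + 1) V(1)`.
Finally `Γ (u + 1) = u Γ u` turns `∏ i, Γ (1 / p i + 1) / Γ (s + 1)` into the stated form.
-/

open MeasureTheory Finset Real
open scoped ENNReal

theorem lintegral_Ici_exp_neg (c : ℝ) :
    ∫⁻ t in Set.Ici c, ENNReal.ofReal (exp (-t)) = ENNReal.ofReal (exp (-c)) := by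
  rw [← restrict_Ioi_eq_restrict_Ici, ← integral_exp_neg_Ioi c,
    ofReal_integral_eq_lintegral_ofReal _ (ae_of_all _ fun t => (exp_pos _).le)]
  have h := exp_neg_integrableOn_Ioi c one_pos
  simp only [neg_mul, one_mul] at h
  exact h

theorem lintegral_exp_neg_eq_lintegral_measure_le {α : Type*} [MeasurableSpace α]
    (μ : Measure α) [SFinite μ] {f : α → ℝ} (hf : Measurable f) :
    ∫⁻ x, ENNReal.ofReal (exp (-f x)) ∂μ =
      ∫⁻ t, μ {x | f x ≤ t} * ENNReal.ofReal (exp (-t)) := by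
  set F : α × ℝ → ℝ≥0∞ := {q | f q.1 ≤ q.2}.indicator fun q => ENNReal.ofReal (exp (-q.2))
  have hF : Measurable F := (measurable_exp.comp measurable_snd.neg).ennreal_ofReal.indicator
    (measurableSet_le (hf.comp measurable_fst) measurable_snd)
  calc ∫⁻ x, ENNReal.ofReal (exp (-f x)) ∂μ = ∫⁻ x, (∫⁻ t : ℝ, F (x, t)) ∂μ := by
        congr with x
        rw [← lintegral_Ici_exp_neg, ← lintegral_indicator measurableSet_Ici]
        rfl
    _ = ∫⁻ t : ℝ, ∫⁻ x, F (x, t) ∂μ :=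
        lintegral_lintegral_swap (f := fun x t => F (x, t)) hF.aemeasurable
    _ = ∫⁻ t, μ {x | f x ≤ t} * ENNReal.ofReal (exp (-t)) := by
        congr with t
        rw [mul_comm, ← lintegral_indicator_const (measurableSet_le hf measurable_const)]
        rfl

theorem lintegral_Ioi_rpow_mul_exp_neg {s : ℝ} (hs : -1 < s) :
    ∫⁻ t in Set.Ioi 0, ENNReal.ofReal (t ^ s) * ENNReal.ofReal (exp (-t)) =
      ENNReal.ofReal (Gamma (s + 1)) := by
  have hs' : 0 < s + 1 := by linarith
  have hconv := GammaIntegral_convergent hs'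
  rw [add_sub_cancel_right] at hconv
  rw [Gamma_eq_integral hs', add_sub_cancel_right, ofReal_integral_eq_lintegral_ofReal hconv
    ((ae_restrict_iff' measurableSet_Ioi).2 (ae_of_all _ fun t (ht : 0 < t) => by positivity))]
  refine setLIntegral_congr_fun measurableSet_Ioi fun t ht => ?_
  rw [mul_comm, ← ENNReal.ofReal_mul (exp_pos _).le]

theorem integrableOn_Ici_exp_neg_rpow {p : ℝ} (hp : 0 < p) :
    IntegrableOn (fun y : ℝ => exp (-y ^ p)) (Set.Ici 0) := by
  rw [integrableOn_Ici_iff_integrableOn_Ioi]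
  simpa using integrableOn_rpow_mul_exp_neg_rpow (s := 0) (by norm_num) hp

theorem integral_Ici_exp_neg_rpow {p : ℝ} (hp : 0 < p) :
    ∫ y in Set.Ici 0, exp (-y ^ p) = Gamma (1 / p + 1) := by
  rw [integral_Ici_eq_integral_Ioi, integral_exp_neg_rpow hp]

section OrthantSublevel

variable {ι : Type*} [Fintype ι] {p : ι → ℝ}

def orthantSublevel (p : ι → ℝ) (t : ℝ) : Set (ι → ℝ) :=
  {x | 0 ≤ x ∧ ∑ i, x i ^ p i ≤ t}

theorem measurable_sum_rpow (p : ι → ℝ) : Measurable fun x : ι → ℝ => ∑ i, x i ^ p i :=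
  Finset.measurable_sum _ fun i _ => (measurable_pi_apply i).pow_const _

theorem preimage_diagonal_orthantSublevel [DecidableEq ι] (hp : ∀ i, 0 < p i) {t : ℝ}
    (ht : 0 < t) :
    Matrix.toLin' (Matrix.diagonal fun i => t ^ (1 / p i)) ⁻¹' orthantSublevel p t =
      orthantSublevel p 1 := by
  ext x
  have hc : ∀ i, 0 < t ^ (1 / p i) := fun i => rpow_pos_of_pos ht _
  have hpow : ∀ i, 0 ≤ x i → (t ^ (1 / p i) * x i) ^ p i = t * x i ^ p i := fun i hx => by
    rw [mul_rpow (hc i).le hx, ← rpow_mul ht.le, one_div_mul_cancel (hp i).ne', rpow_one]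
  simp only [orthantSublevel, Set.mem_preimage, Set.mem_ofPred_eq, Matrix.toLin'_apply,
    Matrix.mulVec_diagonal, Pi.le_def, Pi.zero_apply, fun i => mul_nonneg_iff_of_pos_left (hc i)]
  refine and_congr_right fun hx => ?_
  rw [Finset.sum_congr rfl fun i _ => hpow i (hx i), ← Finset.mul_sum, mul_le_iff_le_one_right ht]

theorem volume_orthantSublevel (hp : ∀ i, 0 < p i) {t : ℝ} (ht : 0 < t) :
    volume (orthantSublevel p t) =
      ENNReal.ofReal (t ^ ∑ i, 1 / p i) * volume (orthantSublevel p 1) := by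
  classical
  set T := Matrix.toLin' (Matrix.diagonal fun i => t ^ (1 / p i))
  have hdet : LinearMap.det T = t ^ ∑ i, 1 / p i := by
    rw [LinearMap.det_toLin', Matrix.det_diagonal, rpow_sum_of_pos ht]
  have hts : 0 < t ^ ∑ i, 1 / p i := rpow_pos_of_pos ht _
  rw [← preimage_diagonal_orthantSublevel hp ht,
    Measure.addHaar_preimage_linearMap _ (hdet ▸ hts.ne'), hdet, ← mul_assoc,
    abs_of_pos (inv_pos.2 hts), ← ENNReal.ofReal_mul hts.le, mul_inv_cancel₀ hts.ne',
    ENNReal.ofReal_one, one_mul]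

theorem lintegral_Ici_exp_neg_sum_rpow (hp : ∀ i, 0 < p i) :
    ∫⁻ x in Set.Ici (0 : ι → ℝ), ENNReal.ofReal (exp (-∑ i, x i ^ p i)) =
      ENNReal.ofReal (∏ i, Gamma (1 / p i + 1)) := by
  have hμ : volume.restrict (Set.Ici (0 : ι → ℝ)) =
      Measure.pi fun _ => volume.restrict (Set.Ici (0 : ℝ)) := by
    rw [← Set.pi_univ_Ici, volume_pi, Measure.restrict_pi_pi]
    rfl
  have hexp : ∀ x : ι → ℝ, exp (-∑ i, x i ^ p i) = ∏ i, exp (-x i ^ p i) := fun x => by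
    rw [← Finset.sum_neg_distrib, exp_sum]
  simp_rw [hμ, hexp]
  rw [← ofReal_integral_eq_lintegral_ofReal
      (Integrable.fintype_prod fun i => integrableOn_Ici_exp_neg_rpow (hp i))
      (ae_of_all _ fun x => Finset.prod_nonneg fun i _ => (exp_pos _).le),
    integral_fintype_prod_eq_prod (f := fun i y => exp (-y ^ p i))]
  simp_rw [integral_Ici_exp_neg_rpow (hp _)]

theorem lintegral_Ici_exp_neg_sum_rpow_eq_volume_mul (hp : ∀ i, 0 < p i) :
    ∫⁻ x in Set.Ici (0 : ι → ℝ), ENNReal.ofReal (exp (-∑ i, x i ^ p i)) =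
      volume (orthantSublevel p 1) * ENNReal.ofReal (Gamma (∑ i, 1 / p i + 1)) := by
  have hlevel : ∀ t, volume.restrict (Set.Ici 0) {x : ι → ℝ | ∑ i, x i ^ p i ≤ t} =
      volume (orthantSublevel p t) := fun t => by
    rw [Measure.restrict_apply (measurableSet_le (measurable_sum_rpow p) measurable_const),
      Set.inter_comm]
    rfl
  have hneg : ∀ t < 0, orthantSublevel p t = ∅ := fun t ht => by
    refine Set.eq_empty_of_forall_notMem fun x ⟨hx, hxt⟩ => ?_
    have : 0 ≤ ∑ i, x i ^ p i := Finset.sum_nonneg fun i _ => rpow_nonneg (hx i) _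
    linarith
  have hsupp : (fun t => volume (orthantSublevel p t) * ENNReal.ofReal (exp (-t))).support ⊆
      Set.Ici 0 := fun t ht => by
    by_contra h
    simp [hneg t (not_le.1 h)] at ht
  rw [lintegral_exp_neg_eq_lintegral_measure_le _ (measurable_sum_rpow p)]
  simp_rw [hlevel]
  rw [← setLIntegral_eq_of_support_subset hsupp, ← restrict_Ioi_eq_restrict_Ici,
    setLIntegral_congr_fun measurableSet_Ioi fun t (ht : 0 < t) => by
      rw [volume_orthantSublevel hp ht, mul_comm _ (volume _), mul_assoc],
    lintegral_const_mul _ (by fun_prop), lintegral_Ioi_rpow_mul_exp_neg]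
  exact neg_one_lt_zero.trans_le (Finset.sum_nonneg fun i _ => (one_div_pos.2 (hp i)).le)

theorem volume_orthantSublevel_one (hp : ∀ i, 0 < p i) :
    volume (orthantSublevel p 1) =
      ENNReal.ofReal ((∏ i, Gamma (1 / p i + 1)) / Gamma (∑ i, 1 / p i + 1)) := by
  have hΓ : 0 < Gamma (∑ i, 1 / p i + 1) :=
    Gamma_pos_of_pos (add_pos_of_nonneg_of_pos
      (Finset.sum_nonneg fun i _ => (one_div_pos.2 (hp i)).le) one_pos)
  rw [ENNReal.ofReal_div_of_pos hΓ, ← lintegral_Ici_exp_neg_sum_rpow hp,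
    lintegral_Ici_exp_neg_sum_rpow_eq_volume_mul hp,
    ENNReal.mul_div_cancel_right (ENNReal.ofReal_pos.2 hΓ).ne' ENNReal.ofReal_ne_top]

end OrthantSublevel

theorem prod_Gamma_add_one_div_Gamma_sum_add_one {ι : Type*} [Fintype ι] [Nonempty ι]
    {a : ι → ℝ} (ha : ∀ i, 0 < a i) :
    (∏ i, Gamma (1 / a i + 1)) / Gamma (∑ i, 1 / a i + 1) =
      (∑ l, (∏ i, a i) / a l)⁻¹ * (∏ i, Gamma (1 / a i)) / Gamma (∑ i, 1 / a i) := by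
  have hs : 0 < ∑ i, 1 / a i := Finset.sum_pos (fun i _ => one_div_pos.2 (ha i)) univ_nonempty
  have hsum : ∑ l, (∏ i, a i) / a l = (∏ i, a i) * ∑ i, 1 / a i := by
    rw [Finset.mul_sum]
    simp_rw [mul_one_div]
  have hnum : ∏ i, Gamma (1 / a i + 1) = (∏ i, a i)⁻¹ * ∏ i, Gamma (1 / a i) := by
    simp_rw [Gamma_add_one (one_div_pos.2 (ha _)).ne', Finset.prod_mul_distrib,
      ← Finset.prod_inv_distrib, one_div]
  rw [hsum, hnum, Gamma_add_one hs.ne']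
  field_simp

theorem stmt9_general (d : ℕ) (hd : 1 ≤ d) (ω : Fin d → ℕ)
    (hpos : ∀ l, 0 < ω l) :
    (volume {x : Fin d → ℝ | (∀ l, 0 ≤ x l) ∧ ∑ l, x l ^ ω l ≤ 1}).toReal =
      (∑ l, (∏ i, (ω i : ℝ)) / (ω l : ℝ))⁻¹ *
        (∏ l, Real.Gamma (1 / (ω l : ℝ))) / Real.Gamma (∑ l, 1 / (ω l : ℝ)) := by
  have hω : ∀ l, 0 < (ω l : ℝ) := fun l => Nat.cast_pos.2 (hpos l)
  have : Nonempty (Fin d) := ⟨⟨0, hd⟩⟩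
  have hset : {x : Fin d → ℝ | (∀ l, 0 ≤ x l) ∧ ∑ l, x l ^ ω l ≤ 1} =
      orthantSublevel (fun l => (ω l : ℝ)) 1 := by
    simp only [orthantSublevel, Pi.le_def, Pi.zero_apply, rpow_natCast]
  rw [hset, volume_orthantSublevel_one hω, ENNReal.toReal_ofReal
    (div_nonneg (Finset.prod_nonneg fun l _ => (Gamma_pos_of_pos (by positivity)).le)
      (Gamma_pos_of_pos (by positivity)).le), prod_Gamma_add_one_div_Gamma_sum_add_one hω]

theorem stmt9 (d : ℕ) (hd : 1 ≤ d) (ω : Fin d → ℕ)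
    (hpos : ∀ l, 0 < ω l) (heven : ∀ l, Even (ω l)) :
    (volume {x : Fin d → ℝ | (∀ l, 0 ≤ x l) ∧ ∑ l, x l ^ ω l ≤ 1}).toReal =
      (∑ l, (∏ i, (ω i : ℝ)) / (ω l : ℝ))⁻¹ *
        (∏ l, Real.Gamma (1 / (ω l : ℝ))) / Real.Gamma (∑ l, 1 / (ω l : ℝ)) :=
  stmt9_general d hd ω hpos
end

section
/- Let f : [0,∞) → [0,∞) be continuous, nonincreasing, supported in [0, X₁], and suppose f is concave up (f'' ≥ 0) on an interval [p − δ, p + δ] ⊂ (0, X₁) with δ > 0. If s ≥ 2/δ, then ∫₀^∞ f(x/s) dx − ∑_{k=1}^∞ f(k/s) ≥ (1/2)(f(p − δ/2) − f(p + δ/2)). -/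
/-!
Write `F x = f (x / s)`. Since `F` is nonincreasing, on each unit interval `[k, k + 1]` the
integral exceeds the right endpoint value `F (k + 1)` by a nonnegative gap. Where `F` is convex it
lies above the extension of its secant over `[k + 1, k + 2]`, so the gap is at least the area
`(F (k + 1) - F (k + 2)) / 2` of a right triangle of width 1. These lower bounds telescope over the
integer points of the convex window `[s (p - 2δ), s (p + 2δ)]`, and `s δ ≥ 2` makes that window
reach past `s (p ∓ δ / 2)` after rounding to integers.
-/

open MeasureTheory Set

noncomputable def unitGap (F : ℝ → ℝ) (x : ℝ) : ℝ := (∫ t in x..x + 1, F t) - F (x + 1)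

lemma unitGap_nonneg {F : ℝ → ℝ} {x : ℝ} (hF : AntitoneOn F (Icc x (x + 1))) :
    0 ≤ unitGap F x := by
  have hx : x ≤ x + 1 := by linarith
  have hint : IntervalIntegrable F volume x (x + 1) :=
    AntitoneOn.intervalIntegrable (by rwa [uIcc_of_le hx])
  have := intervalIntegral.integral_mono_on hx intervalIntegrable_const hint
    fun t ht => hF ht (right_mem_Icc.2 hx) ht.2
  simp only [intervalIntegral.integral_const, add_sub_cancel_left, one_smul] at this
  exact sub_nonneg.2 this

lemma ConvexOn.secant_extension_le {F : ℝ → ℝ} {a b c t : ℝ} (hF : ConvexOn ℝ (Icc a c) F)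
    (hat : a ≤ t) (htb : t ≤ b) (hbc : b < c) :
    F b + (F c - F b) / (c - b) * (t - b) ≤ F t := by
  rcases htb.lt_or_eq with htb | rfl
  · have hslope := hF.slope_mono_adjacent ⟨hat, by linarith⟩ ⟨by linarith, le_rfl⟩ htb hbc
    rw [div_le_iff₀ (by linarith)] at hslope
    linarith
  · simp

lemma half_sub_le_unitGap {F : ℝ → ℝ} {x : ℝ} (hF : ConvexOn ℝ (Icc x (x + 2)) F)
    (hint : IntervalIntegrable F volume x (x + 1)) :
    (F (x + 1) - F (x + 2)) / 2 ≤ unitGap F x := by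
  have htriangle : ∫ t in x..x + 1, (F (x + 1) + (F (x + 1) - F (x + 2)) * (x + 1 - t))
      = F (x + 1) + (F (x + 1) - F (x + 2)) / 2 := by
    rw [intervalIntegral.integral_add intervalIntegrable_const
        (Continuous.intervalIntegrable (by fun_prop) _ _),
      intervalIntegral.integral_const_mul,
      intervalIntegral.integral_comp_sub_left (fun t => t)]
    simp only [intervalIntegral.integral_const, integral_id, smul_eq_mul]
    ring
  have hmono : ∫ t in x..x + 1, (F (x + 1) + (F (x + 1) - F (x + 2)) * (x + 1 - t))
      ≤ ∫ t in x..x + 1, F t :=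
    intervalIntegral.integral_mono_on (by linarith) (Continuous.intervalIntegrable (by fun_prop) _ _)
      hint fun t ht => by
        have := hF.secant_extension_le ht.1 ht.2 (by linarith)
        rw [show x + 2 - (x + 1) = 1 by ring, div_one] at this
        linarith
  rw [unitGap]
  linarith

lemma integral_Ioi_sub_tsum_eq_sum_unitGap {F : ℝ → ℝ} (hF : AntitoneOn F (Ici 0)) {N : ℕ}
    (hN : ∀ x, (N : ℝ) ≤ x → F x = 0) :
    (∫ x in Ioi 0, F x) - ∑' k : ℕ, F (k + 1) = ∑ k ∈ Finset.range N, unitGap F k := by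
  have hint : ∫ x in Ioi 0, F x = ∫ x in (0 : ℝ)..N, F x := by
    rw [intervalIntegral.integral_of_le N.cast_nonneg]
    exact setIntegral_eq_of_subset_of_forall_sdiff_eq_zero measurableSet_Ioi Ioc_subset_Ioi_self
      fun x hx => hN x (not_le.1 fun h => hx.2 ⟨hx.1, h⟩).le
  have hsum : ∑' k : ℕ, F (k + 1) = ∑ k ∈ Finset.range N, F (k + 1) :=
    tsum_eq_sum fun k hk => hN _ (by simp at hk; exact_mod_cast hk.trans k.le_succ)
  have hadj : ∑ k ∈ Finset.range N, ∫ x in (k : ℝ)..k + 1, F x = ∫ x in (0 : ℝ)..N, F x := by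
    simpa using intervalIntegral.sum_integral_adjacent_intervals (a := fun k : ℕ => (k : ℝ))
      fun k _ => AntitoneOn.intervalIntegrable (hF.mono fun x hx =>
        (le_inf k.cast_nonneg (k + 1).cast_nonneg).trans hx.1)
  rw [hint, hsum, ← hadj, ← Finset.sum_sub_distrib]
  rfl

lemma half_sub_le_sum_Ico_unitGap {F : ℝ → ℝ} {m n : ℕ} (hmn : m ≤ n)
    (hanti : AntitoneOn F (Icc (m : ℝ) (n + 1))) (hconv : ConvexOn ℝ (Icc (m : ℝ) (n + 1)) F) :
    (F (m + 1) - F (n + 1)) / 2 ≤ ∑ k ∈ Finset.Ico m n, unitGap F k := by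
  set g : ℕ → ℝ := fun k => -F (k + 1) / 2
  have htel : ∑ k ∈ Finset.Ico m n, (F ((k : ℝ) + 1) - F ((k : ℝ) + 2)) / 2
      = (F (m + 1) - F (n + 1)) / 2 :=
    calc _ = ∑ k ∈ Finset.Ico m n, (g (k + 1) - g k) :=
          Finset.sum_congr rfl fun k _ => by push_cast [g]; ring_nf
      _ = g n - g m := Finset.sum_Ico_sub g hmn
      _ = _ := by ring
  rw [← htel]
  refine Finset.sum_le_sum fun k hk => ?_
  obtain ⟨hmk, hkn⟩ := Finset.mem_Ico.1 hk
  have hsub : Icc (k : ℝ) (k + 2) ⊆ Icc (m : ℝ) (n + 1) := by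
    apply Icc_subset_Icc <;> [exact_mod_cast hmk; exact_mod_cast (by omega : k + 2 ≤ n + 1)]
  refine half_sub_le_unitGap (hconv.subset hsub (convex_Icc _ _))
    (AntitoneOn.intervalIntegrable (hanti.mono ((uIcc_subset_Icc ?_ ?_).trans hsub)))
  all_goals constructor <;> linarith

lemma half_sub_le_integral_sub_tsum {F : ℝ → ℝ} {X u v : ℝ} (hanti : AntitoneOn F (Ici 0))
    (hsupp : ∀ x, X ≤ x → F x = 0) (hconv : ConvexOn ℝ (Icc u v) F) (hu : 0 ≤ u)
    (huv : u + 3 ≤ v) :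
    (F (u + 2) - F (v - 1)) / 2 ≤ (∫ x in Ioi 0, F x) - ∑' k : ℕ, F (k + 1) := by
  -- rounding `[u, v]` inward to `[m, n + 1]` gives `m + 1 ≤ u + 2` and `v - 1 ≤ n + 1`
  set m := ⌈u⌉₊
  obtain ⟨n, hn⟩ : ∃ n, ⌊v⌋₊ = n + 1 :=
    Nat.exists_eq_add_one.2 (Nat.floor_pos.2 (by linarith))
  have hm : (m : ℝ) < u + 1 := Nat.ceil_lt_add_one hu
  have hvn : v < n + 2 := by
    have := Nat.lt_floor_add_one v
    rw [hn] at this; push_cast at this; linarith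
  have hnv : (n : ℝ) + 1 ≤ v := by exact_mod_cast hn ▸ Nat.floor_le (by linarith)
  have hmn : m ≤ n := by exact_mod_cast (by linarith : (m : ℝ) ≤ n)
  set N := ⌈max X v⌉₊
  rw [integral_Ioi_sub_tsum_eq_sum_unitGap hanti (N := N)
    fun x hx => hsupp x ((le_max_left _ _).trans ((Nat.le_ceil _).trans hx))]
  have hsub : Icc (m : ℝ) (n + 1) ⊆ Icc u v := Icc_subset_Icc (Nat.le_ceil u) hnv
  calc (F (u + 2) - F (v - 1)) / 2 ≤ (F (m + 1) - F (n + 1)) / 2 := by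
        have hu1 : (m : ℝ) + 1 ≤ u + 2 := by linarith
        have hv1 : v - 1 ≤ n + 1 := by linarith
        gcongr (?_ - ?_) / 2
        · exact hanti (mem_Ici.2 (by positivity)) (mem_Ici.2 (by positivity)) hu1
        · exact hanti (mem_Ici.2 (by linarith)) (mem_Ici.2 (by positivity)) hv1
    _ ≤ ∑ k ∈ Finset.Ico m n, unitGap F k :=
        half_sub_le_sum_Ico_unitGap hmn (hanti.mono fun x hx => hu.trans (hsub hx).1)
          (hconv.subset hsub (convex_Icc _ _))
    _ ≤ ∑ k ∈ Finset.range N, unitGap F k := by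
        have hnN : (n : ℝ) ≤ N := by
          linarith [le_max_right X v, Nat.le_ceil (max X v)]
        refine Finset.sum_le_sum_of_subset_of_nonneg (fun k hk => ?_) fun k _ _ =>
          unitGap_nonneg (hanti.mono fun x hx => k.cast_nonneg.trans hx.1)
        exact Finset.mem_range.2 ((Finset.mem_Ico.1 hk).2.trans_le (by exact_mod_cast hnN))

theorem stmt14_general (f : ℝ → ℝ) (X₁ p δ : ℝ) (hδ : 0 < δ)
    (hanti : AntitoneOn f (Ici 0))
    (hsupp : ∀ x, X₁ ≤ x → f x = 0)
    (hsub : Icc (p - 2 * δ) (p + 2 * δ) ⊆ Ioo 0 X₁)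
    (hdiff : ∀ x ∈ Icc (p - 2 * δ) (p + 2 * δ), DifferentiableAt ℝ f x)
    (hdiff2 : ∀ x ∈ Icc (p - 2 * δ) (p + 2 * δ), DifferentiableAt ℝ (deriv f) x)
    (hconv : ∀ x ∈ Icc (p - 2 * δ) (p + 2 * δ), 0 ≤ deriv (deriv f) x)
    (s : ℝ) (hs : 2 / δ ≤ s) :
    (1 / 2) * (f (p - δ / 2) - f (p + δ / 2))
      ≤ (∫ x in Ioi (0 : ℝ), f (x / s)) - ∑' k : ℕ, f ((k + 1) / s) := by
  have hs0 : 0 < s := (by positivity : 0 < 2 / δ).trans_le hs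
  have hsδ : 2 ≤ s * δ := by rwa [div_le_iff₀ hδ] at hs
  have hp : 0 < p - 2 * δ := (hsub (left_mem_Icc.2 (by linarith))).1
  have hfconv : ConvexOn ℝ (Icc (p - 2 * δ) (p + 2 * δ)) f :=
    convexOn_of_deriv2_nonneg' (convex_Icc _ _) (fun x hx => (hdiff x hx).differentiableWithinAt)
      (fun x hx => (hdiff2 x hx).differentiableWithinAt) hconv
  set F : ℝ → ℝ := fun x => f (x / s)
  have hFanti : AntitoneOn F (Ici 0) := fun x hx y hy hxy =>
    hanti (div_nonneg hx hs0.le) (div_nonneg hy hs0.le) (div_le_div_of_nonneg_right hxy hs0.le)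
  have hFsupp : ∀ x, s * X₁ ≤ x → F x = 0 := fun x hx =>
    hsupp _ (by rwa [le_div_iff₀ hs0, mul_comm])
  have hFconv : ConvexOn ℝ (Icc (s * (p - 2 * δ)) (s * (p + 2 * δ))) F :=
    (hfconv.comp_linearMap (LinearMap.mulRight ℝ s⁻¹)).subset
      (fun x hx => by
        simp only [mem_preimage, LinearMap.mulRight_apply, ← div_eq_mul_inv]
        exact ⟨(le_div_iff₀' hs0).2 hx.1, (div_le_iff₀' hs0).2 hx.2⟩) (convex_Icc _ _)
  have key := half_sub_le_integral_sub_tsum hFanti hFsupp hFconv (mul_pos hs0 hp).le (by nlinarith)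
  have hleft : f (p - δ / 2) ≤ F (s * (p - 2 * δ) + 2) :=
    hanti (div_nonneg (by nlinarith) hs0.le) (mem_Ici.2 (by linarith))
      ((div_le_iff₀ hs0).2 (by nlinarith))
  have hright : F (s * (p + 2 * δ) - 1) ≤ f (p + δ / 2) :=
    hanti (mem_Ici.2 (by linarith)) (div_nonneg (by nlinarith) hs0.le)
      ((le_div_iff₀ hs0).2 (by nlinarith))
  linarith

theorem stmt14 (f : ℝ → ℝ) (X₁ p δ : ℝ) (hδ : 0 < δ)
    (hcont : ContinuousOn f (Ici 0))
    (hnonneg : ∀ x, 0 ≤ x → 0 ≤ f x)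
    (hanti : AntitoneOn f (Ici 0))
    (hsupp : ∀ x, X₁ ≤ x → f x = 0)
    (hsub : Icc (p - 2 * δ) (p + 2 * δ) ⊆ Ioo 0 X₁)
    (hdiff : ∀ x ∈ Icc (p - 2 * δ) (p + 2 * δ), DifferentiableAt ℝ f x)
    (hdiff2 : ∀ x ∈ Icc (p - 2 * δ) (p + 2 * δ), DifferentiableAt ℝ (deriv f) x)
    (hconv : ∀ x ∈ Icc (p - 2 * δ) (p + 2 * δ), 0 ≤ deriv (deriv f) x)
    (s : ℝ) (hs : 2 / δ ≤ s) :
    (1 / 2) * (f (p - δ / 2) - f (p + δ / 2))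
      ≤ (∫ x in Ioi (0 : ℝ), f (x / s)) - ∑' k : ℕ, f ((k + 1) / s) :=
  stmt14_general f X₁ p δ hδ hanti hsupp hsub hdiff hdiff2 hconv s hs
end
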